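/- arXiv:1909.09916 — 2 statements merged into one kernel-verified Lean document; each statement's English description precedes it below -/
import Mathlib

section
/- Let G be a finite connected simple graph and let P = (v_0, …, v_k) be a path in G that is geodesically closed with respect to G (hence P is itself a geodesic path). In the game of Surrounding Cops and Robbers on G, two cops have a strategy such that, against every robber play, after a finite number of moves the robber never again occupies a vertex of P. -/
/-!
Formalization of the game of Surrounding Cops and Robbers, played on a simple
graph `G` by a cop player controlling `m` cops and a robber player controlling
one robber, with perfect information.  The cops are placed first, then the
robber is placed on a vertex not occupied by a cop; thereafter players
alternate turns (cops first), each pawn moving along an edge or staying put,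
and the robber may never end his turn on a vertex occupied by a cop.  The cop
player wins if at some point every neighbor of the robber's vertex is occupied
by a cop.
-/

/-- One step of a cop or of the robber: stay in place or move along an edge. -/
def stepRel {V : Type*} (G : SimpleGraph V) (x y : V) : Prop := x = y ∨ G.Adj x y

/-- `histList r t = [r 0, r 1, …, r (t-1)]`: the robber's first `t` positions. -/
def histList {V : Type*} (r : ℕ → V) (t : ℕ) : List V := (List.range t).map r

/-- A cop strategy for `m` cops is a function `F` assigning to each finite history of
robber positions the current positions of the cops; `F []` is the initial placement,
made before the robber is placed, and `F (h ++ [x])` is the cops' answer after the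
robber history `h` has been extended by the robber move `x`.  The strategy is valid
if each cop always moves along an edge or stays put. -/
def ValidCopStrategy {V : Type*} (G : SimpleGraph V) {m : ℕ}
    (F : List V → Fin m → V) : Prop :=
  ∀ (h : List V) (x : V) (i : Fin m), stepRel G (F h i) (F (h ++ [x]) i)

/-- An infinite robber play `r` against the cop strategy `F` is legal if the robber
always moves along an edge or stays put, and never ends a turn on a vertex occupied
by a cop (`r 0` is the robber's initial placement, chosen after the cops have been
placed at `F []`, and `r t` is chosen when the cops stand at `F (histList r t)`). -/
def LegalPlay {V : Type*} (G : SimpleGraph V) {m : ℕ}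
    (F : List V → Fin m → V) (r : ℕ → V) : Prop :=
  (∀ t, stepRel G (r t) (r (t + 1))) ∧ ∀ t, ∀ i, F (histList r t) i ≠ r t

/-- The robber is surrounded at time `t`: after the cops' move in round `t + 1`,
every neighbor of the robber's position `r t` is occupied by a cop. -/
def SurroundedAt {V : Type*} (G : SimpleGraph V) {m : ℕ}
    (F : List V → Fin m → V) (r : ℕ → V) (t : ℕ) : Prop :=
  ∀ w, G.Adj (r t) w → ∃ i, F (histList r (t + 1)) i = w

/-- `m` cops have a winning strategy in the game of Surrounding Cops and Robbers
on `G`; equivalently, the surrounding cop number satisfies `s(G) ≤ m`. -/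
def CopsWin {V : Type*} (G : SimpleGraph V) (m : ℕ) : Prop :=
  ∃ F : List V → Fin m → V, ValidCopStrategy G F ∧
    ∀ r : ℕ → V, LegalPlay G F r → ∃ t, SurroundedAt G F r t

/-- A path `p` in `G` is geodesically closed with respect to `G` if for all vertices
`u, v` of `p`, every geodesic `(u,v)`-path in `G` is a subgraph of `p`
(all its vertices and edges belong to `p`). -/
def GeodesicallyClosedPath {V : Type*} (G : SimpleGraph V) {v0 vk : V}
    (p : G.Walk v0 vk) : Prop :=
  ∀ u v : V, u ∈ p.support → v ∈ p.support →
    ∀ q : G.Walk u v, q.IsPath → q.length = G.dist u v →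
      (∀ x ∈ q.support, x ∈ p.support) ∧ ∀ e ∈ q.edges, e ∈ p.edges

/-!
Write `d x = dist v0 x` and `k = p.length`. Cop `i` walks along `p` toward the vertex of index
`min (d x) k - i`, where `x` is the robber's position; since `d` changes by at most one per robber
move, after `k` rounds both cops stand on these two vertices. From then on the robber can enter
`p.getVert j` only from `p.getVert (j - 1)`: a neighbour `x` of `p.getVert j` has
`d x ∈ {j - 1, j, j + 1}`, the cops block the cases `j` and `j + 1`, and if `d x = j - 1` then `x`
lies on a geodesic from `v0` to `p.getVert j`, hence on `p`. So while on `p` the robber's index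
grows by one per round, and after `2k + 1` rounds he is off `p` for good.
-/

lemma stepRel.symm {V : Type*} {G : SimpleGraph V} {x y : V} (h : stepRel G x y) :
    stepRel G y x :=
  h.imp Eq.symm fun h => h.symm

def stepToward (c t : ℕ) : ℕ := if c < t then c + 1 else if t < c then c - 1 else c

/-- Until it is on the target, the pursuer gains one unit per round, so it reaches the target
within `k` rounds; a `1`-Lipschitz target cannot shake it off afterwards. -/
lemma pursuit_eq_of_le {k : ℕ} {s c : ℕ → ℕ} (hs : ∀ t, s t ≤ k)
    (hlip : ∀ t, s (t + 1) ≤ s t + 1 ∧ s t ≤ s (t + 1) + 1) (hc₀ : c 0 = 0)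
    (hc : ∀ t, c (t + 1) = stepToward (c t) (s t)) {t : ℕ} (ht : k ≤ t) :
    c (t + 1) = s t := by
  have hgain : ∀ t, c (t + 1) = s t ∨ c (t + 1) = t + 1 ∧ c (t + 1) < s t := by
    intro t
    induction t with
    | zero => rw [hc, hc₀]; unfold stepToward; split_ifs <;> omega
    | succ t ih =>
      have := hlip t
      rw [hc]; unfold stepToward; split_ifs <;> omega
  have := hs t
  have := hgain t
  omega

namespace SimpleGraph.Walk

variable {V : Type*} {G : SimpleGraph V} {u v : V}

lemma stepRel_getVert_succ (p : G.Walk u v) (n : ℕ) :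
    stepRel G (p.getVert n) (p.getVert (n + 1)) := by
  rcases lt_or_ge n p.length with hn | hn
  · exact .inr (p.adj_getVert_succ hn)
  · exact .inl (by rw [p.getVert_of_length_le hn, p.getVert_of_length_le (by omega)])

lemma le_add_length_of_forall_mem_edges (f : V → ℕ) (q : G.Walk u v)
    (hf : ∀ x y, s(x, y) ∈ q.edges → f y ≤ f x + 1) : f v ≤ f u + q.length := by
  induction q with
  | nil => simp
  | @cons a b c hadj q ih =>
    have hab := hf a b (by simp)
    have hq := ih fun x y hxy => hf x y (by simp [hxy])
    rw [length_cons]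
    omega

lemma IsPath.idxOf_getVert [DecidableEq V] {p : G.Walk u v} (hp : p.IsPath) {n : ℕ}
    (hn : n ≤ p.length) : p.support.idxOf (p.getVert n) = n := by
  rw [p.getVert_eq_support_getElem hn]
  exact hp.support_nodup.idxOf_getElem n _

lemma IsPath.idxOf_le_idxOf_add_one [DecidableEq V] {p : G.Walk u v} (hp : p.IsPath) {x y : V}
    (he : s(x, y) ∈ p.edges) : p.support.idxOf y ≤ p.support.idxOf x + 1 := by
  obtain ⟨i, hi, hxy⟩ := p.mk_mem_edges_iff_exists.mp he
  have hi₀ := hp.idxOf_getVert hi.le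
  have hi₁ := hp.idxOf_getVert (n := i + 1) hi
  rcases Sym2.eq_iff.mp hxy with ⟨rfl, rfl⟩ | ⟨rfl, rfl⟩ <;> omega

lemma stepRel_getVert_stepToward (p : G.Walk u v) (c t : ℕ) :
    stepRel G (p.getVert c) (p.getVert (stepToward c t)) := by
  unfold stepToward
  split_ifs
  · exact p.stepRel_getVert_succ c
  · obtain ⟨c, rfl⟩ := Nat.exists_eq_add_one_of_ne_zero (by omega : c ≠ 0)
    simpa using (p.stepRel_getVert_succ c).symm
  · exact .inl rfl

lemma notMem_support_of_forall_eq_getVert_pred (p : G.Walk u v) {r : ℕ → V} {T : ℕ}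
    (hr : ∀ t, T ≤ t → ∀ j ≤ p.length, r (t + 1) = p.getVert j →
      ∃ i, r t = p.getVert i ∧ j = i + 1)
    {t : ℕ} (ht : T + p.length < t) : r t ∉ p.support := by
  have hindex : ∀ m j, j ≤ p.length → r (T + m) = p.getVert j → m ≤ j := by
    intro m
    induction m with
    | zero => omega
    | succ m ih =>
      intro j hj hrj
      obtain ⟨i, hri, rfl⟩ := hr (T + m) (by omega) j hj hrj
      have := ih i (by omega) hri
      omega
  intro hmem
  obtain ⟨j, hrj, hj⟩ := Walk.mem_support_iff_exists_getVert.mp hmem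
  have := hindex (t - T) j hj (by rw [Nat.add_sub_cancel' (by omega)]; exact hrj.symm)
  omega

end SimpleGraph.Walk

open SimpleGraph

namespace GeodesicallyClosedPath

variable {V : Type*} {G : SimpleGraph V} {v0 vk : V} {p : G.Walk v0 vk}

lemma dist_start_getVert (hclosed : GeodesicallyClosedPath G p) (hpath : p.IsPath) {n : ℕ}
    (hn : n ≤ p.length) : G.dist v0 (p.getVert n) = n := by
  classical
  have hle : G.dist v0 (p.getVert n) ≤ n := by
    simpa [Walk.take_length, hn] using dist_le (p.take n)
  obtain ⟨q, hq, hqlen⟩ := (p.take n).reachable.exists_path_of_dist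
  have hqp := (hclosed _ _ p.start_mem_support (p.getVert_mem_support n) q hq hqlen).2
  have hge := q.le_add_length_of_forall_mem_edges (p.support.idxOf ·)
    fun x y hxy => hpath.idxOf_le_idxOf_add_one (hqp _ hxy)
  rw [hpath.idxOf_getVert hn, ← p.cons_tail_support, List.idxOf_cons_self] at hge
  omega

lemma le_dist_start_of_adj (hclosed : GeodesicallyClosedPath G p) (hpath : p.IsPath) {x : V}
    {j : ℕ} (hj : j ≤ p.length) (hx : x ∉ p.support) (hadj : G.Adj x (p.getVert j)) :
    j ≤ G.dist v0 x := by
  by_contra! hlt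
  have hdj := hclosed.dist_start_getVert hpath hj
  obtain ⟨q, -, hqlen⟩ := ((p.take j).reachable.trans hadj.symm.reachable).exists_path_of_dist
  have hgeod : (q.concat hadj).length = G.dist v0 (p.getVert j) := by
    have := dist_le (q.concat hadj)
    rw [Walk.length_concat] at this ⊢
    omega
  have hsub := (hclosed _ _ p.start_mem_support (p.getVert_mem_support j) _
    ((q.concat hadj).isPath_of_length_eq_dist hgeod) hgeod).1
  exact hx (hsub x (by simp [Walk.support_concat]))

lemma exists_eq_getVert_of_stepRel (hclosed : GeodesicallyClosedPath G p) (hpath : p.IsPath)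
    {x : V} {j : ℕ} (hj : j ≤ p.length) (hstep : stepRel G x (p.getVert j))
    (h₀ : p.getVert (min (G.dist v0 x) p.length) ≠ p.getVert j)
    (h₁ : p.getVert (min (G.dist v0 x) p.length - 1) ≠ p.getVert j) :
    ∃ i, x = p.getVert i ∧ j = i + 1 := by
  have hdj := hclosed.dist_start_getVert hpath hj
  have hne : G.dist v0 x ≠ j := fun h => h₀ (by rw [h, min_eq_left hj])
  have hadj : G.Adj x (p.getVert j) := hstep.resolve_left fun h => hne (h ▸ hdj)
  have hlip := hadj.diff_dist_adj (u := v0)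
  have hsucc : G.dist v0 x + 1 = j := by
    rcases hj.lt_or_eq with hj | rfl
    · have : G.dist v0 x ≠ j + 1 := fun h => h₁ (by rw [h, min_eq_left hj]; rfl)
      omega
    · have : G.dist v0 x ≠ p.length + 1 := fun h => h₀ (by rw [h, min_eq_right (by omega)])
      omega
  have hx : x ∈ p.support := by
    by_contra hx
    have := hclosed.le_dist_start_of_adj hpath hj hx hadj
    omega
  obtain ⟨i, rfl, hi⟩ := Walk.mem_support_iff_exists_getVert.mp hx
  exact ⟨i, rfl, by rw [← hsucc, hclosed.dist_start_getVert hpath hi]⟩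

end GeodesicallyClosedPath

def chase {V : Type*} (s : V → ℕ) (h : List V) : ℕ :=
  h.foldl (fun c x => stepToward c (s x)) 0

lemma chase_append_singleton {V : Type*} (s : V → ℕ) (h : List V) (x : V) :
    chase s (h ++ [x]) = stepToward (chase s h) (s x) := by
  simp [chase]

lemma histList_succ {V : Type*} (r : ℕ → V) (t : ℕ) :
    histList r (t + 1) = histList r t ++ [r t] := by
  simp [histList, List.range_succ]

noncomputable def guardStrategy {V : Type*} (G : SimpleGraph V) {v0 vk : V}
    (p : G.Walk v0 vk) : List V → Fin 2 → V :=
  fun h i => p.getVert (chase (fun x => min (G.dist v0 x) p.length - i) h)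

section guardStrategy

variable {V : Type*} {G : SimpleGraph V} {v0 vk : V} (p : G.Walk v0 vk)

lemma validCopStrategy_guardStrategy : ValidCopStrategy G (guardStrategy G p) := by
  intro h x i
  rw [guardStrategy, guardStrategy, chase_append_singleton]
  exact p.stepRel_getVert_stepToward _ _

lemma guardStrategy_histList_succ {r : ℕ → V} (hr : ∀ t, stepRel G (r t) (r (t + 1)))
    (i : Fin 2) {t : ℕ} (ht : p.length ≤ t) :
    guardStrategy G p (histList r (t + 1)) i =
      p.getVert (min (G.dist v0 (r t)) p.length - i) := by
  set s : V → ℕ := fun x => min (G.dist v0 x) p.length - i with hs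
  suffices chase s (histList r (t + 1)) = s (r t) by rw [guardStrategy, this]
  refine pursuit_eq_of_le (k := p.length) (s := fun t => s (r t))
    (c := fun t => chase s (histList r t)) (fun t => by simp only [hs]; omega) (fun t => ?_) rfl
    (fun t => by rw [histList_succ, chase_append_singleton]) ht
  rcases hr t with h | hadj
  · simp only [h]
    omega
  · have := hadj.diff_dist_adj (u := v0)
    simp only [hs]
    omega

end guardStrategy

theorem two_cops_guard_geodesically_closed_general {V : Type*} (G : SimpleGraph V)
    {v0 vk : V} (p : G.Walk v0 vk) (hpath : p.IsPath)
    (hclosed : GeodesicallyClosedPath G p) :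
    ∃ F : List V → Fin 2 → V, ValidCopStrategy G F ∧
      ∀ r : ℕ → V, LegalPlay G F r →
        ∃ T : ℕ, ∀ t, T ≤ t → r t ∉ p.support := by
  refine ⟨guardStrategy G p, validCopStrategy_guardStrategy p, fun r hr => ?_⟩
  refine ⟨p.length + p.length + 1, fun t ht => ?_⟩
  refine p.notMem_support_of_forall_eq_getVert_pred (T := p.length) (fun t ht j hj hrj => ?_)
    (by omega)
  have hcop (i : Fin 2) : p.getVert (min (G.dist v0 (r t)) p.length - i) ≠ p.getVert j := by
    rw [← guardStrategy_histList_succ p hr.1 i ht, ← hrj]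
    exact hr.2 (t + 1) i
  exact hclosed.exists_eq_getVert_of_stepRel hpath hj (hrj ▸ hr.1 t) (hcop 0) (hcop 1)

/-- Let `G` be a finite connected simple graph and let
`P = (v_0, …, v_k)` be a path in `G` that is geodesically closed with respect to `G`
(hence `P` is itself a geodesic path).  In the game of Surrounding Cops and Robbers
on `G`, two cops have a strategy such that, against every robber play, after a
finite number of moves the robber never again occupies a vertex of `P`. -/
theorem two_cops_guard_geodesically_closed {V : Type*} [Fintype V] (G : SimpleGraph V)
    (hconn : G.Connected) {v0 vk : V} (p : G.Walk v0 vk) (hpath : p.IsPath)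
    (hclosed : GeodesicallyClosedPath G p) :
    ∃ F : List V → Fin 2 → V, ValidCopStrategy G F ∧
      ∀ r : ℕ → V, LegalPlay G F r →
        ∃ T : ℕ, ∀ t, T ≤ t → r t ∉ p.support :=
  two_cops_guard_geodesically_closed_general G p hpath hclosed
end

section
/- Let G be a finite connected bipartite simple graph and let P = (v_0, …, v_k) be a geodesic path in G. In the game of Surrounding Cops and Robbers on G, two cops have a strategy such that, against every robber play, after a finite number of moves the robber never again occupies a vertex of P. -/
/-!
Write `d` for the distance from `v0`. As `G` is bipartite, a robber move either keeps him in
place or changes `d` by exactly one, and as `p` is geodesic, its vertex of index `i` has `d = i`.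
Both cops stay on `p`, so they only need to watch the robber's *shadow*: his distance `j` and
whether he is on `p`. In chase mode the cops walk along `p` toward the indices `j - 1` and `j + 1`;
a target that moves by at most one per round on a bounded segment is eventually caught, after
which the robber can only reach `p` through a cop. If he sits on `p` when they arrive, the lower
cop steps onto him with the other just above (escort mode): he must move, down along `p` or off
it. In escort mode the index of the lower cop never increases, and it drops whenever the robber
was on `p`, so he visits `p` only finitely often.
-/

namespace SimpleGraph

variable {V : Type*} {G : SimpleGraph V} {u v x y : V}

theorem Reachable.dist_ne_dist_of_adj (hbip : G.Colorable 2) (hux : G.Reachable u x)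
    (hxy : G.Adj x y) : G.dist u x ≠ G.dist u y := by
  obtain ⟨wx, hwx⟩ := hux.exists_walk_length_eq_dist
  obtain ⟨wy, hwy⟩ := (hux.trans hxy.reachable).exists_walk_length_eq_dist
  have heven := two_colorable_iff_forall_loop_even.mp hbip u ((wx.concat hxy).append wy.reverse)
  simp only [Walk.length_append, Walk.length_concat, Walk.length_reverse, hwx, hwy] at heven
  intro heq
  rw [heq, Nat.even_add, Nat.even_add_one] at heven
  tauto

theorem Reachable.dist_eq_add_one_or_of_adj (hbip : G.Colorable 2) (hux : G.Reachable u x)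
    (hxy : G.Adj x y) : G.dist u y = G.dist u x + 1 ∨ G.dist u x = G.dist u y + 1 := by
  have := hxy.diff_dist_adj (u := u)
  have := hux.dist_ne_dist_of_adj hbip hxy
  omega

namespace Walk

variable (p : G.Walk u v)

theorem dist_getVert_of_length_eq_dist (hp : p.length = G.dist u v) {i : ℕ} (hi : i ≤ p.length) :
    G.dist u (p.getVert i) = i := by
  simpa [hi] using (length_eq_dist_of_subwalk hp (p.isSubwalk_take i)).symm

theorem mem_support_iff_of_length_eq_dist (hp : p.length = G.dist u v) :
    x ∈ p.support ↔ G.dist u x ≤ p.length ∧ p.getVert (G.dist u x) = x := by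
  rw [mem_support_iff_exists_getVert]
  constructor
  · rintro ⟨i, rfl, hi⟩
    rw [p.dist_getVert_of_length_eq_dist hp hi]
    exact ⟨hi, rfl⟩
  · rintro ⟨hle, hx⟩
    exact ⟨_, hx, hle⟩

theorem stepRel_getVert_succ_s4 (i : ℕ) : stepRel G (p.getVert i) (p.getVert (i + 1)) := by
  rcases lt_or_ge i p.length with hi | hi
  · exact Or.inr (p.adj_getVert_succ hi)
  · exact Or.inl (by rw [p.getVert_of_length_le hi, p.getVert_of_length_le (by omega)])

theorem stepRel_getVert {m n : ℕ} (hmn : m ≤ n + 1) (hnm : n ≤ m + 1) :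
    stepRel G (p.getVert m) (p.getVert n) := by
  obtain rfl | rfl | rfl : n = m ∨ n = m + 1 ∨ m = n + 1 := by omega
  · exact Or.inl rfl
  · exact p.stepRel_getVert_succ_s4 m
  · exact (p.stepRel_getVert_succ_s4 n).elim (fun h => Or.inl h.symm) (fun h => Or.inr h.symm)

end Walk

end SimpleGraph

namespace GeodesicGuard

def toward (x y : ℕ) : ℕ := max (min y (x + 1)) (x - 1)

theorem exists_forall_toward_eq {a T : ℕ → ℕ} {k : ℕ}
    (ha : ∀ t, a (t + 1) = toward (a t) (T (t + 1)))
    (hT : ∀ t, T (t + 1) ≤ T t + 1 ∧ T t ≤ T (t + 1) + 1) (hTk : ∀ t, T t ≤ k) :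
    ∃ N, ∀ t, N ≤ t → a t = T t := by
  simp only [toward] at ha
  suffices ∃ N, a N = T N by
    obtain ⟨N, hN⟩ := this
    refine ⟨N, fun t ht => ?_⟩
    induction t, ht using Nat.le_induction with
    | base => exact hN
    | succ t _ ih => have := ha t; have := hT t; omega
  -- Until it catches the target, the pursuer keeps moving in the same direction.
  by_contra! hne
  have below (h0 : a 0 < T 0) (t : ℕ) : a t = a 0 + t ∧ a t < T t := by
    induction t with
    | zero => omega
    | succ t ih => have := ha t; have := hT t; have := hne (t + 1); omega
  have above (h0 : T 0 < a 0) (t : ℕ) : a t + t = a 0 ∧ T t < a t := by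
    induction t with
    | zero => omega
    | succ t ih => have := ha t; have := hT t; have := hne (t + 1); omega
  rcases lt_trichotomy (a 0) (T 0) with h0 | h0 | h0
  · have := below h0 (k + 1); have := hTk (k + 1); omega
  · exact hne 0 h0
  · have := above h0 (a 0 + 1); omega

theorem exists_forall_le_not_of_antitone {f : ℕ → ℕ} {P : ℕ → Prop} (hf : Antitone f)
    (hP : ∀ t, P t → f (t + 1) < f t) : ∃ N, ∀ t, N ≤ t → ¬ P t := by
  obtain ⟨N, hN⟩ := WellFoundedLT.antitone_chain_condition hf
  refine ⟨N, fun t ht hPt => ?_⟩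
  have := hN t ht
  have := hN (t + 1) (by omega)
  have := hP t hPt
  omega

/-- The cops stand at the vertices of index `lo` and `hi` of a geodesic of length `k`. They see
the robber only through his shadow `(j, o)`: his distance `j` from the start of the geodesic, and
whether he is on it (`o`). -/
structure CopState where
  escort : Bool
  lo : ℕ
  hi : ℕ

def ShadowStep (j : ℕ) (o : Bool) (j' : ℕ) (o' : Bool) : Prop :=
  j' = j ∧ o' = o ∨ j' = j + 1 ∨ j = j' + 1

theorem ShadowStep.le_and_le {j j' : ℕ} {o o' : Bool} (h : ShadowStep j o j' o') :
    j' ≤ j + 1 ∧ j ≤ j' + 1 := by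
  rcases h with ⟨rfl, -⟩ | rfl | rfl <;> omega

namespace CopState

variable (k : ℕ)

def Locked (s : CopState) (j : ℕ) : Prop := s.lo = min (j - 1) k ∧ s.hi = min (j + 1) k

instance (s : CopState) (j : ℕ) : Decidable (s.Locked k j) :=
  inferInstanceAs (Decidable (_ ∧ _))

def next (s : CopState) (j : ℕ) (o : Bool) : CopState :=
  if s.escort ∧ j ≤ s.lo ∨ ¬ s.escort ∧ o ∧ s.Locked k j then
    ⟨true, toward s.lo j, toward s.hi (min (j + 1) k)⟩
  else
    ⟨false, toward s.lo (min (j - 1) k), toward s.hi (min (j + 1) k)⟩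

def Guards (s : CopState) (j : ℕ) (o : Bool) : Prop :=
  match s.escort with
  | true => s.lo = j ∧ j ≤ k ∧ s.hi = min (j + 1) k
  | false => o = false ∧ s.Locked k j

def Admissible (s : CopState) (j : ℕ) (o : Bool) : Prop :=
  o = true → j ≤ k ∧ j ≠ s.lo ∧ j ≠ s.hi

def potential (s : CopState) : ℕ :=
  match s.escort with
  | true => s.lo + 1
  | false => 0

variable {k} {s : CopState} {j j' : ℕ} {o o' : Bool}

theorem next_of_escort_of_le (hs : s.escort = true) (hj : j ≤ s.lo) :
    s.next k j o = ⟨true, toward s.lo j, toward s.hi (min (j + 1) k)⟩ :=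
  if_pos (.inl ⟨hs, hj⟩)

theorem next_of_escort_of_lt (hs : s.escort = true) (hj : s.lo < j) :
    s.next k j o = ⟨false, toward s.lo (min (j - 1) k), toward s.hi (min (j + 1) k)⟩ :=
  if_neg <| by
    rintro (⟨-, h⟩ | ⟨h, -⟩)
    · omega
    · exact h hs

theorem next_of_locked (hs : s.escort = false) (ho : o = true) (hl : s.Locked k j) :
    s.next k j o = ⟨true, toward s.lo j, toward s.hi (min (j + 1) k)⟩ :=
  if_pos (.inr ⟨by simp [hs], ho, hl⟩)

theorem next_of_escort_next_eq_false (h : (s.next k j o).escort = false) :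
    s.next k j o = ⟨false, toward s.lo (min (j - 1) k), toward s.hi (min (j + 1) k)⟩ := by
  unfold next at h ⊢
  split_ifs at h ⊢
  rfl

theorem next_of_offPath (hs : s.escort = false) :
    s.next k j false = ⟨false, toward s.lo (min (j - 1) k), toward s.hi (min (j + 1) k)⟩ :=
  if_neg (by simp [hs])

theorem next_lo_near (s : CopState) (j : ℕ) (o : Bool) :
    s.lo ≤ (s.next k j o).lo + 1 ∧ (s.next k j o).lo ≤ s.lo + 1 := by
  unfold next
  split_ifs <;> simp only [toward] <;> omega

theorem next_hi_near (s : CopState) (j : ℕ) (o : Bool) :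
    s.hi ≤ (s.next k j o).hi + 1 ∧ (s.next k j o).hi ≤ s.hi + 1 := by
  unfold next
  split_ifs <;> simp only [toward] <;> omega

theorem Locked.eq_of_admissible (hs : s.Locked k j) (hstep : ShadowStep j o j' o')
    (hadm : s.Admissible k j' o') (ho' : o' = true) : j' = j ∧ o = true := by
  have := hadm ho'
  simp only [Locked] at hs
  rcases hstep with h | h | h
  · exact ⟨h.1, h.2 ▸ ho'⟩
  all_goals omega

theorem Guards.onPath_eq_false (hs : s.Guards k j o) (hesc : s.escort = false)
    (hstep : ShadowStep j o j' o') (hadm : s.Admissible k j' o') : o' = false := by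
  simp only [Guards, hesc] at hs
  cases o'
  · rfl
  · obtain ⟨-, rfl⟩ := hs.2.eq_of_admissible hstep hadm rfl
    simp at hs

theorem guards_next (hs : s.Guards k j o) (hstep : ShadowStep j o j' o')
    (hadm : s.Admissible k j' o') : (s.next k j' o').Guards k j' o' := by
  cases hesc : s.escort
  · obtain rfl := hs.onPath_eq_false hesc hstep hadm
    simp only [Guards, hesc, Locked] at hs
    have := hstep.le_and_le
    rw [next_of_offPath hesc]
    simp only [Guards, Locked, toward, true_and]
    omega
  · simp only [Guards, hesc] at hs
    rcases hstep with ⟨rfl, rfl⟩ | rfl | rfl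
    · rw [next_of_escort_of_le hesc hs.1.ge]
      simp only [Guards, toward]
      omega
    · have ho' : o' = false := Bool.eq_false_iff.mpr fun h => by have := hadm h; omega
      subst ho'
      rw [next_of_escort_of_lt hesc (by omega)]
      simp only [Guards, Locked, toward, true_and]
      omega
    · rw [next_of_escort_of_le hesc (by omega)]
      simp only [Guards, toward]
      omega

theorem potential_next_le (hs : s.Guards k j o) (hstep : ShadowStep j o j' o')
    (hadm : s.Admissible k j' o') : (s.next k j' o').potential ≤ s.potential := by
  cases hesc : s.escort
  · obtain rfl := hs.onPath_eq_false hesc hstep hadm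
    rw [next_of_offPath hesc]
    exact Nat.zero_le _
  · simp only [Guards, hesc] at hs
    rcases hstep with ⟨rfl, rfl⟩ | rfl | rfl
    · rw [next_of_escort_of_le hesc hs.1.ge]
      simp only [potential, hesc, toward]
      omega
    · rw [next_of_escort_of_lt hesc (by omega)]
      simp only [potential, zero_le]
    · rw [next_of_escort_of_le hesc (by omega)]
      simp only [potential, hesc, toward]
      omega

theorem potential_next_lt (hs : s.Guards k j o) (ho : o = true) (hstep : ShadowStep j o j' o')
    (hadm : s.Admissible k j' o') : (s.next k j' o').potential < s.potential := by
  cases hesc : s.escort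
  · simp [Guards, hesc, ho] at hs
  · simp only [Guards, hesc] at hs
    rcases hstep with ⟨rfl, rfl⟩ | rfl | rfl
    · exact absurd hs.1.symm (hadm ho).2.1
    · rw [next_of_escort_of_lt hesc (by omega)]
      simp only [potential, hesc]
      omega
    · rw [next_of_escort_of_le hesc (by omega)]
      simp only [potential, hesc, toward]
      omega

theorem guards_next_of_escort_next (hs : s.escort = false) (hnext : (s.next k j o).escort = true)
    (hadm : o = true → j ≤ k) : (s.next k j o).Guards k j o := by
  by_cases h : o = true ∧ s.Locked k j
  · have := hadm h.1
    rw [next_of_locked hs h.1 h.2]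
    simp only [Guards, Locked, toward] at h ⊢
    omega
  · simp [next, hs, h] at hnext

end CopState

/-- `dist t` and `onPath t` are the shadow of the robber's `t`-th position, which he chooses while
the cops are in state `cops t`. -/
structure ShadowPlay (k : ℕ) where
  cops : ℕ → CopState
  dist : ℕ → ℕ
  onPath : ℕ → Bool
  escort_cops_zero : (cops 0).escort = false
  cops_succ : ∀ t, cops (t + 1) = (cops t).next k (dist t) (onPath t)
  shadowStep : ∀ t, ShadowStep (dist t) (onPath t) (dist (t + 1)) (onPath (t + 1))
  admissible : ∀ t, (cops t).Admissible k (dist t) (onPath t)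

namespace ShadowPlay

variable {k : ℕ} (P : ShadowPlay k)

theorem exists_guards_of_forall_escort_eq_false (h : ∀ t, (P.cops t).escort = false) :
    ∃ t, (P.cops (t + 1)).Guards k (P.dist t) (P.onPath t) := by
  have hchase (t : ℕ) : P.cops (t + 1) = ⟨false, toward (P.cops t).lo (min (P.dist t - 1) k),
      toward (P.cops t).hi (min (P.dist t + 1) k)⟩ := by
    have hnext := h (t + 1)
    rw [P.cops_succ] at hnext ⊢
    exact CopState.next_of_escort_next_eq_false hnext
  obtain ⟨N₁, h₁⟩ := exists_forall_toward_eq (a := fun t => (P.cops (t + 1)).lo)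
    (T := fun t => min (P.dist t - 1) k) (fun t => by simp [hchase (t + 1)])
    (fun t => by have := (P.shadowStep t).le_and_le; omega) (fun t => min_le_right _ k)
  obtain ⟨N₂, h₂⟩ := exists_forall_toward_eq (a := fun t => (P.cops (t + 1)).hi)
    (T := fun t => min (P.dist t + 1) k) (fun t => by simp [hchase (t + 1)])
    (fun t => by have := (P.shadowStep t).le_and_le; omega) (fun t => min_le_right _ k)
  set t := max N₁ N₂
  have hlocked (n : ℕ) (hn : t ≤ n) : (P.cops (n + 1)).Locked k (P.dist n) :=
    ⟨h₁ n (by omega), h₂ n (by omega)⟩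
  -- A robber reaching the path past locked cops has stayed put, which starts escort mode.
  have hoff : P.onPath (t + 1) = false := by
    by_contra hon
    rw [Bool.not_eq_false] at hon
    obtain ⟨hstay, -⟩ := (hlocked t le_rfl).eq_of_admissible (P.shadowStep t)
      (P.admissible (t + 1)) hon
    have hentry := h (t + 2)
    rw [P.cops_succ, CopState.next_of_locked (h (t + 1)) hon (hstay ▸ hlocked t le_rfl)] at hentry
    exact Bool.noConfusion hentry
  exact ⟨t + 1, by simp [CopState.Guards, h (t + 2), hoff, hlocked (t + 1) (by omega)]⟩

theorem exists_guards : ∃ t, (P.cops (t + 1)).Guards k (P.dist t) (P.onPath t) := by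
  classical
  by_cases h : ∃ t, (P.cops t).escort = true
  swap
  · exact P.exists_guards_of_forall_escort_eq_false fun t =>
      Bool.eq_false_iff.mpr (not_exists.mp h t)
  obtain ⟨t, ht⟩ : ∃ t, Nat.find h = t + 1 := Nat.exists_eq_add_one.mpr
    (Nat.pos_of_ne_zero fun h0 => by simpa [h0, P.escort_cops_zero] using Nat.find_spec h)
  have hbefore : (P.cops t).escort = false := by
    simpa using Nat.find_min h (show t < Nat.find h by omega)
  have hafter : (P.cops (t + 1)).escort = true := ht ▸ Nat.find_spec h
  refine ⟨t, ?_⟩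
  rw [P.cops_succ] at hafter ⊢
  exact CopState.guards_next_of_escort_next hbefore hafter fun ho => (P.admissible t ho).1

theorem guards_of_le {T : ℕ} (hT : (P.cops (T + 1)).Guards k (P.dist T) (P.onPath T)) {t : ℕ}
    (ht : T ≤ t) : (P.cops (t + 1)).Guards k (P.dist t) (P.onPath t) := by
  induction t, ht using Nat.le_induction with
  | base => exact hT
  | succ t _ ih =>
    rw [P.cops_succ]
    exact CopState.guards_next ih (P.shadowStep t) (P.admissible (t + 1))

theorem eventually_onPath_eq_false : ∃ T, ∀ t, T ≤ t → P.onPath t = false := by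
  obtain ⟨T, hT⟩ := P.exists_guards
  have hguards (n : ℕ) := P.guards_of_le hT (Nat.le_add_right T n)
  obtain ⟨N, hN⟩ := exists_forall_le_not_of_antitone
    (f := fun n => (P.cops (T + n + 1)).potential) (P := fun n => P.onPath (T + n) = true)
    (antitone_nat_of_succ_le fun n => by
      rw [show T + (n + 1) + 1 = T + n + 1 + 1 by omega, P.cops_succ]
      exact CopState.potential_next_le (hguards n) (P.shadowStep _) (P.admissible _))
    (fun n hn => by
      rw [show T + (n + 1) + 1 = T + n + 1 + 1 by omega, P.cops_succ]
      exact CopState.potential_next_lt (hguards n) hn (P.shadowStep _) (P.admissible _))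
  refine ⟨T + N, fun t ht => ?_⟩
  simpa [show T + (t - T) = t by omega] using hN (t - T) (by omega)

end ShadowPlay

section Strategy

variable {V : Type*} {G : SimpleGraph V} {v₀ v : V}

theorem shadowStep_of_stepRel (f : V → Bool) (hbip : G.Colorable 2) {u w : V}
    (hu : G.Reachable v₀ u) (h : stepRel G u w) :
    ShadowStep (G.dist v₀ u) (f u) (G.dist v₀ w) (f w) := by
  rcases h with rfl | hadj
  · exact Or.inl ⟨rfl, rfl⟩
  · exact Or.inr (hu.dist_eq_add_one_or_of_adj hbip hadj)

variable [DecidableEq V] (p : G.Walk v₀ v)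

noncomputable def guardState (h : List V) : CopState :=
  h.foldl (fun s u => s.next p.length (G.dist v₀ u) (decide (u ∈ p.support))) ⟨false, 0, 0⟩

noncomputable def guardStrategy (h : List V) : Fin 2 → V :=
  ![p.getVert (guardState p h).lo, p.getVert (guardState p h).hi]

theorem guardState_append_singleton (h : List V) (u : V) :
    guardState p (h ++ [u]) =
      (guardState p h).next p.length (G.dist v₀ u) (decide (u ∈ p.support)) := by
  simp [guardState]

theorem validCopStrategy_guardStrategy : ValidCopStrategy G (guardStrategy p) := by
  intro h u i
  have hlo := (guardState p h).next_lo_near (k := p.length) (G.dist v₀ u) (decide (u ∈ p.support))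
  have hhi := (guardState p h).next_hi_near (k := p.length) (G.dist v₀ u) (decide (u ∈ p.support))
  fin_cases i
  · simpa [guardStrategy, guardState_append_singleton] using p.stepRel_getVert hlo.1 hlo.2
  · simpa [guardStrategy, guardState_append_singleton] using p.stepRel_getVert hhi.1 hhi.2

theorem eventually_not_mem_support (hconn : G.Connected) (hbip : G.Colorable 2)
    (hp : p.length = G.dist v₀ v) {r : ℕ → V} (hr : LegalPlay G (guardStrategy p) r) :
    ∃ T, ∀ t, T ≤ t → r t ∉ p.support := by
  let P : ShadowPlay p.length :=
    { cops := fun t => guardState p (histList r t)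
      dist := fun t => G.dist v₀ (r t)
      onPath := fun t => decide (r t ∈ p.support)
      escort_cops_zero := rfl
      cops_succ := fun t => by
        simp only [histList, List.range_succ, List.map_append, List.map_singleton,
          guardState_append_singleton]
      shadowStep := fun t =>
        shadowStep_of_stepRel (fun u => decide (u ∈ p.support)) hbip (hconn v₀ (r t)) (hr.1 t)
      admissible := fun t hon => by
        obtain ⟨hle, hget⟩ := (p.mem_support_iff_of_length_eq_dist hp).1 (of_decide_eq_true hon)
        refine ⟨hle, fun hlo => hr.2 t 0 ?_, fun hhi => hr.2 t 1 ?_⟩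
        · simpa [guardStrategy, ← hlo] using hget
        · simpa [guardStrategy, ← hhi] using hget }
  obtain ⟨T, hT⟩ := P.eventually_onPath_eq_false
  exact ⟨T, fun t ht => by simpa [P] using hT t ht⟩

end Strategy

end GeodesicGuard

theorem two_cops_guard_geodesic_bipartite_general {V : Type*} (G : SimpleGraph V)
    (hconn : G.Connected) (hbip : G.Colorable 2)
    {v0 vk : V} (p : G.Walk v0 vk)
    (hgeo : p.length = G.dist v0 vk) :
    ∃ F : List V → Fin 2 → V, ValidCopStrategy G F ∧
      ∀ r : ℕ → V, LegalPlay G F r →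
        ∃ T : ℕ, ∀ t, T ≤ t → r t ∉ p.support := by
  classical
  exact ⟨GeodesicGuard.guardStrategy p, GeodesicGuard.validCopStrategy_guardStrategy p,
    fun _ hr => GeodesicGuard.eventually_not_mem_support p hconn hbip hgeo hr⟩

/-- Let `G` be a finite connected bipartite simple graph and let
`P = (v_0, …, v_k)` be a geodesic path in `G`.  In the game of Surrounding Cops and
Robbers on `G`, two cops have a strategy such that, against every robber play,
after a finite number of moves the robber never again occupies a vertex of `P`. -/
theorem two_cops_guard_geodesic_bipartite {V : Type*} [Fintype V] (G : SimpleGraph V)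
    (hconn : G.Connected) (hbip : G.Colorable 2)
    {v0 vk : V} (p : G.Walk v0 vk) (hpath : p.IsPath)
    (hgeo : p.length = G.dist v0 vk) :
    ∃ F : List V → Fin 2 → V, ValidCopStrategy G F ∧
      ∀ r : ℕ → V, LegalPlay G F r →
        ∃ T : ℕ, ∀ t, T ≤ t → r t ∉ p.support :=
  two_cops_guard_geodesic_bipartite_general G hconn hbip p hgeo
end
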